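/- (Kernel remainder estimate) Let n ≥ 3, m ≥ 1 an integer, and let z ∈ ℂ with n−1 < Re z < n. Then for all x, y ∈ ℝⁿ with x ≠ y and y ≠ 0, | |x−y|^{−n+z} − Σ_{j=0}^{m−1} (1/j!) (∂/∂s)^j |sx−y|^{−n+z} |_{s=0} | ≤ C e^{c|Im z|} (|x|/|y|)^{m−1+n−Re z} |x−y|^{−n+Re z}, where C, c depend only on n and m. -/

import Mathlib

open MeasureTheory ENNReal Metric Set Filter
open scoped FourierTransform
noncomputable section

abbrev Euc (n : ℕ) := EuclideanSpace ℝ (Fin n)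

/-- The axis-parallel cube with corner `a` and side length `s`. -/
def cube {n : ℕ} (a : Fin n → ℝ) (s : ℝ) : Set (Euc n) :=
  {x | ∀ i, a i ≤ x i ∧ x i ≤ a i + s}

/-- The Morrey norm `‖V‖_{𝓛^{α,p}} = sup_Q |Q|^{α/n} ((1/|Q|)∫_Q V^p)^{1/p}`. -/
def morrey (n : ℕ) (α p : ℝ) (V : Euc n → ℝ) : ℝ≥0∞ :=
  ⨆ (a : Fin n → ℝ) (s : ℝ) (_ : 0 < s),
    volume (cube a s) ^ (α / n) *
      ((volume (cube a s))⁻¹ * ∫⁻ y in cube a s, ENNReal.ofReal (V y ^ p)) ^ (1 / p)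

/-!
Write `w = z - n`, so that `-1 < Re w < 0`. On the real line, `s ↦ ‖s • x - y‖ ^ w` is the
restriction of `ζ ↦ (‖x‖² ζ² - 2⟪x, y⟫ ζ + ‖y‖²) ^ (w / 2)`, which is holomorphic on the disc
`‖ζ‖ ≤ ‖y‖ / (4‖x‖)` because there the quadratic has real part at least `‖y‖² / 2`. Cauchy's
estimates bound the Taylor coefficients at `0` by `2 e^{π |Im w|} ‖y‖^{Re w} (4‖x‖/‖y‖)^j`.
If `8‖x‖ ≤ ‖y‖` the disc contains `1`, so the remainder is the tail of a series dominated by a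
geometric one with ratio `≤ 1/2`. Otherwise `‖x‖/‖y‖ > 1/8`, and the kernel and each of the `m`
Taylor terms are bounded separately by the right-hand side.
-/

open scoped Real Topology InnerProductSpace

theorem iteratedDeriv_comp_ofReal {G : ℂ → ℂ} {U : Set ℂ} (hU : IsOpen U)
    (hG : DifferentiableOn ℂ G U) (j : ℕ) {s : ℝ} (hs : (s : ℂ) ∈ U) :
    iteratedDeriv j (fun t : ℝ => G t) s = iteratedDeriv j G s := by
  induction j generalizing s with
  | zero => simp
  | succ j ih =>
    have hderiv : DifferentiableAt ℂ (iteratedDeriv j G) s := by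
      rw [iteratedDeriv_eq_iterate]
      exact ((hG.analyticOnNhd hU).iterated_deriv j s hs).differentiableAt
    have heq : iteratedDeriv j (fun t : ℝ => G t) =ᶠ[𝓝 s] fun t : ℝ => iteratedDeriv j G t :=
      Filter.mem_of_superset ((hU.preimage Complex.continuous_ofReal).mem_nhds hs) fun t ht => ih ht
    rw [iteratedDeriv_succ, iteratedDeriv_succ, heq.deriv_eq]
    exact hderiv.hasDerivAt.comp_ofReal.deriv

theorem rpow_le_rpow_sub_mul_rpow {c t a b : ℝ} (hc : 0 < c) (hct : 1 ≤ c * t) (hab : a ≤ b) :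
    t ^ a ≤ c ^ (b - a) * t ^ b := by
  have ht : 0 < t := pos_of_mul_pos_right (by linarith) hc.le
  calc t ^ a = (c * t) ^ (a - b) * (c ^ (b - a) * t ^ b) := by
        rw [Real.mul_rpow hc.le ht.le, mul_mul_mul_comm, ← Real.rpow_add hc, ← Real.rpow_add ht]
        simp
    _ ≤ 1 * (c ^ (b - a) * t ^ b) := by
        gcongr
        exact Real.rpow_le_one_of_one_le_of_nonpos hct (sub_nonpos.mpr hab)
    _ = c ^ (b - a) * t ^ b := one_mul _

theorem rpow_norm_le_one_add_div_rpow_mul {F : Type*} [NormedAddCommGroup F] {x y : F}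
    {ρ : ℝ} (hρ : ρ ≤ 0) (hxy : x ≠ y) (hy : y ≠ 0) :
    ‖y‖ ^ ρ ≤ (1 + ‖x‖ / ‖y‖) ^ (-ρ) * ‖x - y‖ ^ ρ := by
  have hy₀ : 0 < ‖y‖ := norm_pos_iff.mpr hy
  have hs : 0 < 1 + ‖x‖ / ‖y‖ := by positivity
  have hdist : ‖x - y‖ ≤ (1 + ‖x‖ / ‖y‖) * ‖y‖ := by
    rw [add_mul, one_mul, div_mul_cancel₀ _ hy₀.ne']
    linarith [norm_sub_le x y]
  calc ‖y‖ ^ ρ = (1 + ‖x‖ / ‖y‖) ^ (-ρ) * ((1 + ‖x‖ / ‖y‖) * ‖y‖) ^ ρ := by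
        rw [Real.mul_rpow hs.le hy₀.le, ← mul_assoc, ← Real.rpow_add hs, neg_add_cancel,
          Real.rpow_zero, one_mul]
    _ ≤ (1 + ‖x‖ / ‖y‖) ^ (-ρ) * ‖x - y‖ ^ ρ := mul_le_mul_of_nonneg_left
        (Real.rpow_le_rpow_of_nonpos (norm_pos_iff.mpr (sub_ne_zero.mpr hxy)) hdist hρ)
        (by positivity)

variable {E : Type*} [NormedAddCommGroup E] [InnerProductSpace ℝ E]

def lineNormSq (x y : E) (ζ : ℂ) : ℂ :=
  (‖x‖ ^ 2 : ℝ) * ζ ^ 2 - (2 * ⟪x, y⟫_ℝ : ℝ) * ζ + (‖y‖ ^ 2 : ℝ)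

theorem lineNormSq_ofReal (x y : E) (s : ℝ) :
    lineNormSq x y s = ((‖s • x - y‖ ^ 2 : ℝ) : ℂ) := by
  rw [norm_sub_sq_real, norm_smul, real_inner_smul_left, mul_pow, Real.norm_eq_abs, sq_abs,
    lineNormSq]
  push_cast
  ring

theorem differentiable_lineNormSq (x y : E) : Differentiable ℂ (lineNormSq x y) := by
  unfold lineNormSq
  fun_prop

theorem half_sq_norm_le_re_lineNormSq {x y : E} {ζ : ℂ} (hζ : 4 * ‖x‖ * ‖ζ‖ ≤ ‖y‖) :
    ‖y‖ ^ 2 / 2 ≤ (lineNormSq x y ζ).re := by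
  have hre : (lineNormSq x y ζ).re =
      ‖x‖ ^ 2 * (ζ.re ^ 2 - ζ.im ^ 2) - 2 * ⟪x, y⟫_ℝ * ζ.re + ‖y‖ ^ 2 := by
    simp [lineNormSq, sq]
  have hinner : |⟪x, y⟫_ℝ| ≤ ‖x‖ * ‖y‖ := abs_real_inner_le_norm x y
  have hsq : ‖x‖ ^ 2 * (ζ.re ^ 2 + ζ.im ^ 2) ≤ (‖y‖ / 4) ^ 2 := by
    have h : (‖x‖ * ‖ζ‖) ^ 2 ≤ (‖y‖ / 4) ^ 2 := pow_le_pow_left₀ (by positivity) (by linarith) 2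
    rw [mul_pow, Complex.sq_norm, Complex.normSq_apply] at h
    linarith
  have hre_le : 4 * (‖x‖ * |ζ.re|) ≤ ‖y‖ := by
    have := mul_le_mul_of_nonneg_left (Complex.abs_re_le_norm ζ) (norm_nonneg x)
    linarith
  have hcross : 2 * ⟪x, y⟫_ℝ * ζ.re ≤ 2 * (‖x‖ * |ζ.re|) * ‖y‖ := by
    have := mul_le_mul_of_nonneg_right hinner (abs_nonneg ζ.re)
    nlinarith [le_abs_self (⟪x, y⟫_ℝ * ζ.re), abs_mul ⟪x, y⟫_ℝ ζ.re]
  have hu : (‖x‖ * |ζ.re|) ^ 2 = ‖x‖ ^ 2 * ζ.re ^ 2 := by rw [mul_pow, sq_abs]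
  have hprod := mul_nonneg (sub_nonneg.mpr hre_le)
    (by linarith [norm_nonneg y] : 0 ≤ 3 * ‖y‖ - 4 * (‖x‖ * |ζ.re|))
  rw [hre]
  linear_combination hsq + hcross + hprod / 8 + sq_nonneg ‖y‖ / 16 + 2 * hu

def kernelExt (x y : E) (w ζ : ℂ) : ℂ := lineNormSq x y ζ ^ (w / 2)

theorem kernelExt_ofReal (x y : E) (w : ℂ) (s : ℝ) :
    kernelExt x y w s = ((‖s • x - y‖ : ℝ) : ℂ) ^ w := by
  have harg : Complex.arg ((‖s • x - y‖ : ℝ) : ℂ) = 0 :=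
    Complex.arg_ofReal_of_nonneg (norm_nonneg _)
  rw [kernelExt, lineNormSq_ofReal, Complex.ofReal_pow,
    ← Complex.cpow_ofNat_mul' (by simp [harg, Real.pi_pos]) (by simp [harg, Real.pi_pos.le]),
    mul_div_cancel₀ _ two_ne_zero]

theorem differentiableAt_kernelExt {x y : E} (w : ℂ) {ζ : ℂ} (hy : y ≠ 0)
    (hζ : 4 * ‖x‖ * ‖ζ‖ ≤ ‖y‖) : DifferentiableAt ℂ (kernelExt x y w) ζ := by
  have hre : 0 < (lineNormSq x y ζ).re :=
    lt_of_lt_of_le (by positivity) (half_sq_norm_le_re_lineNormSq hζ)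
  exact (differentiable_lineNormSq x y ζ).cpow_const (Complex.mem_slitPlane_iff.mpr (.inl hre))

theorem norm_kernelExt_le {x y : E} {w ζ : ℂ} (hy : y ≠ 0) (hζ : 4 * ‖x‖ * ‖ζ‖ ≤ ‖y‖)
    (hw₁ : -1 ≤ w.re) (hw₀ : w.re ≤ 0) :
    ‖kernelExt x y w ζ‖ ≤ 2 * Real.exp (π * |w.im|) * ‖y‖ ^ w.re := by
  set u := lineNormSq x y ζ
  have hy₀ : 0 < ‖y‖ := norm_pos_iff.mpr hy
  have hu : (‖y‖ / 2) ^ 2 ≤ ‖u‖ := by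
    have := (half_sq_norm_le_re_lineNormSq hζ).trans (Complex.re_le_norm u)
    nlinarith
  have hmod : ‖u‖ ^ (w.re / 2) ≤ 2 * ‖y‖ ^ w.re :=
    calc ‖u‖ ^ (w.re / 2) ≤ ((‖y‖ / 2) ^ 2) ^ (w.re / 2) :=
          Real.rpow_le_rpow_of_nonpos (by positivity) hu (by linarith)
      _ = ‖y‖ ^ w.re / 2 ^ w.re := by
          rw [← Real.rpow_natCast, ← Real.rpow_mul (by positivity), Nat.cast_ofNat,
            mul_div_cancel₀ _ two_ne_zero, Real.div_rpow hy₀.le zero_le_two]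
      _ ≤ 2 * ‖y‖ ^ w.re := by
          rw [div_le_iff₀ (by positivity), mul_comm, ← mul_assoc]
          refine le_mul_of_one_le_left (by positivity) ?_
          calc (1 : ℝ) = 2 ^ (-1 : ℝ) * 2 := by norm_num
            _ ≤ 2 ^ w.re * 2 := by gcongr; norm_num
  have harg : -(Complex.arg u * (w / 2).im) ≤ π * |w.im| := by
    have hpi : |Complex.arg u| * |w.im| ≤ π * |w.im| :=
      mul_le_mul_of_nonneg_right (Complex.abs_arg_le_pi u) (abs_nonneg _)
    have habs := neg_abs_le (Complex.arg u * w.im)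
    rw [abs_mul] at habs
    have hpi₀ := mul_nonneg Real.pi_pos.le (abs_nonneg w.im)
    simp only [Complex.div_ofNat_im]
    linarith
  calc ‖kernelExt x y w ζ‖ ≤ ‖u‖ ^ (w / 2).re / Real.exp (Complex.arg u * (w / 2).im) :=
        Complex.norm_cpow_le _ _
    _ = ‖u‖ ^ (w.re / 2) * Real.exp (-(Complex.arg u * (w / 2).im)) := by
        rw [Real.exp_neg, div_eq_mul_inv, Complex.div_ofNat_re]
    _ ≤ 2 * ‖y‖ ^ w.re * Real.exp (π * |w.im|) := by gcongr
    _ = 2 * Real.exp (π * |w.im|) * ‖y‖ ^ w.re := by ring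

theorem differentiableOn_kernelExt {x y : E} (w : ℂ) (hx : x ≠ 0) (hy : y ≠ 0) :
    DifferentiableOn ℂ (kernelExt x y w) (closedBall 0 (‖y‖ / (4 * ‖x‖))) := fun ζ hζ => by
  rw [mem_closedBall_zero_iff, le_div_iff₀' (by positivity)] at hζ
  exact (differentiableAt_kernelExt w hy hζ).differentiableWithinAt

theorem norm_iteratedDeriv_kernelExt_le {x y : E} {w : ℂ} (hx : x ≠ 0) (hy : y ≠ 0)
    (hw₁ : -1 ≤ w.re) (hw₀ : w.re ≤ 0) (j : ℕ) :
    ‖iteratedDeriv j (kernelExt x y w) 0‖ ≤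
      j.factorial * (2 * Real.exp (π * |w.im|) * ‖y‖ ^ w.re) * (4 * (‖x‖ / ‖y‖)) ^ j := by
  have hR : 0 < ‖y‖ / (4 * ‖x‖) := by positivity
  have hdiff : DiffContOnCl ℂ (kernelExt x y w) (ball 0 (‖y‖ / (4 * ‖x‖))) :=
    DifferentiableOn.diffContOnCl <| by
      rw [closure_ball (0 : ℂ) hR.ne']
      exact differentiableOn_kernelExt w hx hy
  have hbound : ∀ ζ ∈ sphere (0 : ℂ) (‖y‖ / (4 * ‖x‖)),
      ‖kernelExt x y w ζ‖ ≤ 2 * Real.exp (π * |w.im|) * ‖y‖ ^ w.re := fun ζ hζ => by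
    rw [mem_sphere_zero_iff_norm, _root_.eq_div_iff (by positivity)] at hζ
    exact norm_kernelExt_le hy (by rw [mul_comm, hζ]) hw₁ hw₀
  calc ‖iteratedDeriv j (kernelExt x y w) 0‖
      ≤ j.factorial * (2 * Real.exp (π * |w.im|) * ‖y‖ ^ w.re) / (‖y‖ / (4 * ‖x‖)) ^ j :=
        Complex.norm_iteratedDeriv_le_of_forall_mem_sphere_norm_le j hR hdiff hbound
    _ = j.factorial * (2 * Real.exp (π * |w.im|) * ‖y‖ ^ w.re) * (4 * (‖x‖ / ‖y‖)) ^ j := by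
        rw [div_eq_mul_inv, ← inv_pow, inv_div, mul_div_assoc]

def kernelTaylorCoeff (x y : E) (w : ℂ) (j : ℕ) : ℂ :=
  1 / (j.factorial : ℂ) * iteratedDeriv j (fun s : ℝ => ((‖s • x - y‖ : ℝ) : ℂ) ^ w) 0

theorem iteratedDeriv_cpow_norm_smul_sub_eq {x y : E} (w : ℂ) (hy : y ≠ 0) (j : ℕ) :
    iteratedDeriv j (fun s : ℝ => ((‖s • x - y‖ : ℝ) : ℂ) ^ w) 0 =
      iteratedDeriv j (kernelExt x y w) 0 := by
  have hU : IsOpen {ζ : ℂ | 4 * ‖x‖ * ‖ζ‖ < ‖y‖} :=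
    isOpen_lt (by fun_prop) continuous_const
  have hG : DifferentiableOn ℂ (kernelExt x y w) {ζ : ℂ | 4 * ‖x‖ * ‖ζ‖ < ‖y‖} :=
    fun ζ hζ => (differentiableAt_kernelExt w hy (le_of_lt hζ)).differentiableWithinAt
  have h0 : ((0 : ℝ) : ℂ) ∈ {ζ : ℂ | 4 * ‖x‖ * ‖ζ‖ < ‖y‖} := by simpa using hy
  simp_rw [← kernelExt_ofReal x y w]
  exact_mod_cast iteratedDeriv_comp_ofReal hU hG j h0

theorem hasSum_kernelTaylorCoeff {x y : E} (w : ℂ) (hx : x ≠ 0) (h : 8 * ‖x‖ ≤ ‖y‖) :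
    HasSum (kernelTaylorCoeff x y w) (((‖x - y‖ : ℝ) : ℂ) ^ w) := by
  have hx₀ : 0 < ‖x‖ := norm_pos_iff.mpr hx
  have hy : y ≠ 0 := norm_pos_iff.mp (by linarith)
  have h1 : (1 : ℂ) ∈ ball 0 (‖y‖ / (4 * ‖x‖)) := by
    rw [mem_ball_zero_iff, norm_one, lt_div_iff₀ (by positivity)]
    linarith
  have hsum := Complex.hasSum_taylorSeries_on_ball
    ((differentiableOn_kernelExt w hx hy).mono ball_subset_closedBall) h1
  rw [← Complex.ofReal_one, kernelExt_ofReal, one_smul] at hsum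
  refine hsum.congr_fun fun j => ?_
  simp [kernelTaylorCoeff, iteratedDeriv_cpow_norm_smul_sub_eq w hy]

theorem norm_kernelTaylorCoeff_le {x y : E} {w : ℂ} (hx : x ≠ 0) (hy : y ≠ 0)
    (hw₁ : -1 ≤ w.re) (hw₀ : w.re ≤ 0) (j : ℕ) :
    ‖kernelTaylorCoeff x y w j‖ ≤
      2 * Real.exp (π * |w.im|) * ‖y‖ ^ w.re * (4 * (‖x‖ / ‖y‖)) ^ j := by
  have hj : (0 : ℝ) < j.factorial := by positivity
  rw [kernelTaylorCoeff, iteratedDeriv_cpow_norm_smul_sub_eq w hy, norm_mul, norm_div, norm_one,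
    Complex.norm_natCast, div_mul_eq_mul_div, one_mul, div_le_iff₀ hj]
  calc ‖iteratedDeriv j (kernelExt x y w) 0‖
      ≤ j.factorial * (2 * Real.exp (π * |w.im|) * ‖y‖ ^ w.re) * (4 * (‖x‖ / ‖y‖)) ^ j :=
        norm_iteratedDeriv_kernelExt_le hx hy hw₁ hw₀ j
    _ = _ := by ring

theorem sum_kernelTaylorCoeff_zero_left (y : E) (w : ℂ) {m : ℕ} (hm : 1 ≤ m) :
    ∑ j ∈ Finset.range m, kernelTaylorCoeff 0 y w j = ((‖y‖ : ℝ) : ℂ) ^ w := by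
  simp [kernelTaylorCoeff, iteratedDeriv_const, Finset.mem_range.mpr hm]

theorem norm_sub_sum_kernelTaylorCoeff_le_of_near {x y : E} {w : ℂ} (m : ℕ) (hx : x ≠ 0)
    (hw₁ : -1 ≤ w.re) (hw₀ : w.re ≤ 0) (h : 8 * ‖x‖ ≤ ‖y‖) :
    ‖((‖x - y‖ : ℝ) : ℂ) ^ w - ∑ j ∈ Finset.range m, kernelTaylorCoeff x y w j‖ ≤
      8 * 4 ^ m * Real.exp (π * |w.im|) * (‖x‖ / ‖y‖) ^ ((m : ℝ) - 1 - w.re) *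
        ‖x - y‖ ^ w.re := by
  have hx₀ : 0 < ‖x‖ := norm_pos_iff.mpr hx
  have hy₀ : 0 < ‖y‖ := by linarith
  have hy : y ≠ 0 := norm_pos_iff.mp hy₀
  have hxy : x ≠ y := by rintro rfl; linarith
  set t := ‖x‖ / ‖y‖
  have ht₀ : 0 < t := by positivity
  have ht : t ≤ 1 / 8 := by rw [div_le_iff₀ hy₀]; linarith
  have hgeom := norm_sub_le_of_geometric_bound_of_hasSum (by linarith : 4 * t < 1)
    (norm_kernelTaylorCoeff_le hx hy hw₁ hw₀) (hasSum_kernelTaylorCoeff w hx h) m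
  rw [norm_sub_rev] at hgeom
  have hy_le : ‖y‖ ^ w.re ≤ 2 * ‖x - y‖ ^ w.re := by
    refine (rpow_norm_le_one_add_div_rpow_mul hw₀ hxy hy).trans
      (mul_le_mul_of_nonneg_right ?_ (by positivity))
    calc (1 + t) ^ (-w.re) ≤ 1 + t := Real.rpow_le_self_of_one_le (by linarith) (by linarith)
      _ ≤ 2 := by linarith
  have ht_pow : t ^ m ≤ t ^ ((m : ℝ) - 1 - w.re) := by
    rw [← Real.rpow_natCast]
    exact Real.rpow_le_rpow_of_exponent_ge ht₀ (by linarith) (by linarith)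
  calc _ ≤ 2 * Real.exp (π * |w.im|) * ‖y‖ ^ w.re * (4 * t) ^ m / (1 - 4 * t) := hgeom
    _ ≤ 2 * (2 * Real.exp (π * |w.im|) * ‖y‖ ^ w.re * (4 * t) ^ m) := by
        rw [div_le_iff₀ (by linarith)]
        have : 0 ≤ 2 * Real.exp (π * |w.im|) * ‖y‖ ^ w.re * (4 * t) ^ m := by positivity
        nlinarith
    _ = 4 * 4 ^ m * Real.exp (π * |w.im|) * t ^ m * ‖y‖ ^ w.re := by ring
    _ ≤ 4 * 4 ^ m * Real.exp (π * |w.im|) * t ^ ((m : ℝ) - 1 - w.re) * (2 * ‖x - y‖ ^ w.re) := by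
        gcongr
    _ = _ := by ring

theorem norm_sub_sum_kernelTaylorCoeff_le_of_far {x y : E} {w : ℂ} {m : ℕ} (hm : 1 ≤ m)
    (hy : y ≠ 0) (hxy : x ≠ y) (hw₁ : -1 ≤ w.re) (hw₀ : w.re ≤ 0) (h : ‖y‖ < 8 * ‖x‖) :
    ‖((‖x - y‖ : ℝ) : ℂ) ^ w - ∑ j ∈ Finset.range m, kernelTaylorCoeff x y w j‖ ≤
      18 * (m + 1) * 32 ^ m * Real.exp (π * |w.im|) * (‖x‖ / ‖y‖) ^ ((m : ℝ) - 1 - w.re) *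
        ‖x - y‖ ^ w.re := by
  have hy₀ : 0 < ‖y‖ := norm_pos_iff.mpr hy
  have hx : x ≠ 0 := norm_pos_iff.mp (by linarith)
  set t := ‖x‖ / ‖y‖
  set β : ℝ := (m : ℝ) - 1 - w.re
  set B := 18 * 32 ^ m * Real.exp (π * |w.im|) * t ^ β * ‖x - y‖ ^ w.re
  have ht : 1 ≤ 8 * t := by rw [mul_div_assoc', le_div_iff₀ hy₀]; linarith
  have ht₀ : 0 < t := by linarith
  have hm' : (1 : ℝ) ≤ m := by exact_mod_cast hm
  have hscale : ∀ a : ℝ, β - m ≤ a → a ≤ β → t ^ a ≤ 8 ^ m * t ^ β := fun a ha hab => by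
    refine (rpow_le_rpow_sub_mul_rpow (by norm_num) ht hab).trans
      (mul_le_mul_of_nonneg_right ?_ (by positivity))
    rw [← Real.rpow_natCast]
    exact Real.rpow_le_rpow_of_exponent_le (by norm_num) (by linarith)
  have hK : ‖((‖x - y‖ : ℝ) : ℂ) ^ w‖ ≤ B := by
    have hE : 1 ≤ Real.exp (π * |w.im|) := Real.one_le_exp (by positivity)
    have h8 : (8 : ℝ) ^ m ≤ 32 ^ m := pow_le_pow_left₀ (by norm_num) (by norm_num) m
    have h32 : (0 : ℝ) ≤ 32 ^ m := by positivity
    have h1 : 1 ≤ 8 ^ m * t ^ β := by simpa using hscale 0 (by linarith) (by linarith)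
    rw [Complex.norm_cpow_eq_rpow_re_of_pos (norm_pos_iff.mpr (sub_ne_zero.mpr hxy))]
    calc ‖x - y‖ ^ w.re ≤ 8 ^ m * t ^ β * ‖x - y‖ ^ w.re :=
          le_mul_of_one_le_left (by positivity) h1
      _ ≤ B := by dsimp only [B]; gcongr; nlinarith
  have hy_le : ‖y‖ ^ w.re ≤ 9 * t ^ (-w.re) * ‖x - y‖ ^ w.re := by
    refine (rpow_norm_le_one_add_div_rpow_mul hw₀ hxy hy).trans
      (mul_le_mul_of_nonneg_right ?_ (by positivity))
    calc (1 + t) ^ (-w.re) ≤ (9 * t) ^ (-w.re) :=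
          Real.rpow_le_rpow (by positivity) (by linarith) (by linarith)
      _ = 9 ^ (-w.re) * t ^ (-w.re) := Real.mul_rpow (by norm_num) (by positivity)
      _ ≤ 9 * t ^ (-w.re) := by
          gcongr
          exact Real.rpow_le_self_of_one_le (by norm_num) (by linarith)
  have hcoeff : ∀ j ∈ Finset.range m, ‖kernelTaylorCoeff x y w j‖ ≤ B := fun j hj => by
    have hjm : j ≤ m := (Finset.mem_range.mp hj).le
    have hj : (j : ℝ) + 1 ≤ m := by exact_mod_cast Finset.mem_range.mp hj
    calc ‖kernelTaylorCoeff x y w j‖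
        ≤ 2 * Real.exp (π * |w.im|) * ‖y‖ ^ w.re * (4 * t) ^ j :=
          norm_kernelTaylorCoeff_le hx hy hw₁ hw₀ j
      _ ≤ 2 * Real.exp (π * |w.im|) * (9 * t ^ (-w.re) * ‖x - y‖ ^ w.re) * (4 * t) ^ j := by
          gcongr
      _ = 18 * Real.exp (π * |w.im|) * 4 ^ j * (t ^ (j : ℝ) * t ^ (-w.re)) * ‖x - y‖ ^ w.re := by
          rw [mul_pow, Real.rpow_natCast]; ring
      _ = 18 * Real.exp (π * |w.im|) * 4 ^ j * t ^ ((j : ℝ) - w.re) * ‖x - y‖ ^ w.re := by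
          rw [← Real.rpow_add ht₀, ← sub_eq_add_neg]
      _ ≤ 18 * Real.exp (π * |w.im|) * 4 ^ m * (8 ^ m * t ^ β) * ‖x - y‖ ^ w.re := by
          gcongr
          · norm_num
          · exact hscale _ (by linarith) (by linarith)
      _ = B := by
          dsimp only [B]
          rw [show (32 : ℝ) ^ m = 4 ^ m * 8 ^ m by rw [← mul_pow]; norm_num]
          ring
  calc _ ≤ ‖((‖x - y‖ : ℝ) : ℂ) ^ w‖ + ∑ j ∈ Finset.range m, ‖kernelTaylorCoeff x y w j‖ :=
        (norm_sub_le _ _).trans (add_le_add le_rfl (norm_sum_le _ _))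
    _ ≤ B + m * B := by
        gcongr
        simpa using Finset.sum_le_sum hcoeff
    _ = _ := by ring

theorem kernel_remainder_estimate_general (n : ℕ) (m : ℕ) (hm : 1 ≤ m) :
    ∃ C c : ℝ, 0 < C ∧ 0 < c ∧ ∀ z : ℂ, (n : ℝ) - 1 < z.re → z.re < n →
      ∀ x y : Euc n, x ≠ y → y ≠ 0 →
      ‖(‖x - y‖ : ℂ) ^ (z - n) -
          ∑ j ∈ Finset.range m, (1 / (j.factorial : ℂ)) *
            iteratedDeriv j (fun s : ℝ => ((‖s • x - y‖ : ℝ) : ℂ) ^ (z - n)) 0‖ ≤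
        C * Real.exp (c * |z.im|) * (‖x‖ / ‖y‖) ^ ((m : ℝ) - 1 + n - z.re) *
          ‖x - y‖ ^ (z.re - n) := by
  refine ⟨18 * (m + 1) * 32 ^ m, π, by positivity, Real.pi_pos, fun z hz₁ hz₂ x y hxy hy => ?_⟩
  have hre : (z - n).re = z.re - n := by simp
  have him : (z - n).im = z.im := by simp
  have hw₁ : -1 ≤ (z - n).re := by rw [hre]; linarith
  have hw₀ : (z - n).re ≤ 0 := by rw [hre]; linarith
  rw [show (m : ℝ) - 1 + n - z.re = m - 1 - (z - n).re by rw [hre]; ring, ← hre, ← him]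
  change ‖_ - ∑ j ∈ Finset.range m, kernelTaylorCoeff x y (z - n) j‖ ≤ _
  rcases eq_or_ne x 0 with rfl | hx
  · rw [sum_kernelTaylorCoeff_zero_left y _ hm, zero_sub, norm_neg, sub_self, norm_zero]
    positivity
  rcases le_or_gt (8 * ‖x‖) ‖y‖ with h | h
  · refine (norm_sub_sum_kernelTaylorCoeff_le_of_near m hx hw₁ hw₀ h).trans ?_
    gcongr ?_ * _ * _ * _
    calc (8 : ℝ) * 4 ^ m ≤ 18 * 1 * 32 ^ m := by
          gcongr
          all_goals norm_num
      _ ≤ 18 * (m + 1) * 32 ^ m := by gcongr; linarith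
  · exact norm_sub_sum_kernelTaylorCoeff_le_of_far hm hy hxy hw₁ hw₀ h

/-- Taylor remainder estimate for the kernel `|x-y|^{-n+z}`. -/
theorem kernel_remainder_estimate (n : ℕ) (hn : 3 ≤ n) (m : ℕ) (hm : 1 ≤ m) :
    ∃ C c : ℝ, 0 < C ∧ 0 < c ∧ ∀ z : ℂ, (n : ℝ) - 1 < z.re → z.re < n →
      ∀ x y : Euc n, x ≠ y → y ≠ 0 →
      ‖(‖x - y‖ : ℂ) ^ (z - n) -
          ∑ j ∈ Finset.range m, (1 / (j.factorial : ℂ)) *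
            iteratedDeriv j (fun s : ℝ => ((‖s • x - y‖ : ℝ) : ℂ) ^ (z - n)) 0‖ ≤
        C * Real.exp (c * |z.im|) * (‖x‖ / ‖y‖) ^ ((m : ℝ) - 1 + n - z.re) *
          ‖x - y‖ ^ (z.re - n) :=
  kernel_remainder_estimate_general n m hm
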